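/- For every integer c ≥ 1, the sum N_c = Σ_{k=1}^{c} w_{k,c} satisfies N_c < π. -/

import Mathlib

open Real

/-- The `c`-th Legendre polynomial, `P_c(x) = (1/(2^c c!)) (d/dx)^c (x² − 1)^c`,
viewed as a real function. -/
noncomputable def legendreP (c : ℕ) (t : ℝ) : ℝ :=
  (1 / (2 ^ c * (Nat.factorial c : ℝ))) *
    iteratedDeriv c (fun s : ℝ => (s ^ 2 - 1) ^ c) t

/-- `x : ℕ → ℕ → ℝ` enumerates, for each `c ≥ 1`, the roots of the `c`-th Legendre
polynomial in `(−1, 1)` in increasing order: `x k c` is the `k`-th root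
`x_{k,c}` (for `1 ≤ k ≤ c`), these are roots lying in `(−1,1)`, they are strictly
increasing in `k`, and every root of `P_c` in `(−1,1)` occurs among them. -/
def IsLegendreRootSystem (x : ℕ → ℕ → ℝ) : Prop :=
  ∀ c : ℕ, 1 ≤ c →
    (∀ k : ℕ, 1 ≤ k → k ≤ c → x k c ∈ Set.Ioo (-1 : ℝ) 1 ∧ legendreP c (x k c) = 0) ∧
    (∀ k l : ℕ, 1 ≤ k → k < l → l ≤ c → x k c < x l c) ∧
    (∀ t ∈ Set.Ioo (-1 : ℝ) 1, legendreP c t = 0 → ∃ k : ℕ, 1 ≤ k ∧ k ≤ c ∧ x k c = t)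

/-- The weight `w_{k,c} = 2 / ((1 − x_{k,c}²)^{3/2} · P_c′(x_{k,c})²)`. -/
noncomputable def wLeg (x : ℕ → ℕ → ℝ) (k c : ℕ) : ℝ :=
  2 / ((1 - x k c ^ 2) ^ ((3 : ℝ) / 2) * (deriv (legendreP c) (x k c)) ^ 2)

/-- The normalizing constant `N_c = Σ_{k=1}^c w_{k,c}`. -/
noncomputable def NLeg (x : ℕ → ℕ → ℝ) (c : ℕ) : ℝ :=
  ∑ k ∈ Finset.Icc 1 c, wLeg x k c


/-!
Sonin's argument. For `u(θ) = √(sin θ) P_c(cos θ)` Legendre's equation becomes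
`u'' + q u = 0` with `q(θ) = (c + ½)² + 1 / (4 sin² θ)`, so the energy `E = q u² + u'²` satisfies
`E' = q' u²`: it is smallest at `θ = π/2`, i.e. `x = 0`. At a root `x_k` of `P_c` the energy equals
`(1 − x_k²)^{3/2} P_c'(x_k)²`, so every weight is at most `2 / E(0)`. Up to sign,
`P_{2m}(0) = C(2m, m) / 4^m` and `P_{2m+1}'(0) = (2m + 1) C(2m, m) / 4^m`, and the strict Wallis
inequality `W_m < π / 2` turns this into `E(0) > 2c / π`, i.e. `w_{k,c} < π / c`.
-/

open Real Polynomial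
open scoped Nat

namespace Polynomial

theorem iterate_derivative_eval_zero {R : Type*} [CommSemiring R] (p : R[X]) (n : ℕ) :
    (derivative^[n] p).eval 0 = n ! * p.coeff n := by
  rw [← coeff_zero_eq_eval_zero, coeff_iterate_derivative, zero_add, Nat.descFactorial_self,
    nsmul_eq_mul]

section Rodrigues

variable {R : Type*} [CommRing R]

theorem coeff_X_sq_sub_one_pow (c j : ℕ) :
    (((X : R[X]) ^ 2 - 1) ^ c).coeff (2 * j) = (-1 : R) ^ (c - j) * c.choose j := by
  have : ((X : R[X]) ^ 2 - 1) ^ c = expand R 2 ((X + C (-1)) ^ c) := by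
    simp [sub_eq_add_neg]
  rw [this, coeff_expand_mul' two_pos, coeff_X_add_C_pow]

theorem X_sq_sub_one_mul_derivative_pow (c : ℕ) :
    ((X : R[X]) ^ 2 - 1) * derivative ((X ^ 2 - 1) ^ c) = 2 * (c : R[X]) * X * (X ^ 2 - 1) ^ c := by
  cases c with
  | zero => simp
  | succ c =>
    rw [derivative_pow, derivative_sub, derivative_X_pow, derivative_one, map_natCast, map_natCast]
    push_cast
    ring

theorem X_sq_sub_one_mul_iterate_derivative (c n : ℕ) :
    ((X : R[X]) ^ 2 - 1) * derivative^[n + 2] ((X ^ 2 - 1) ^ c) =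
      (2 * c - 2 * n - 2 : R[X]) * X * derivative^[n + 1] ((X ^ 2 - 1) ^ c)
        + ((n + 1) * (2 * c - n) : R[X]) * derivative^[n] ((X ^ 2 - 1) ^ c) := by
  induction n with
  | zero =>
    have h := congrArg derivative (X_sq_sub_one_mul_derivative_pow (R := R) c)
    simp only [Function.iterate_succ_apply', Function.iterate_zero_apply, derivative_mul,
      derivative_sub, derivative_X_pow, derivative_X, derivative_one, derivative_natCast,
      derivative_ofNat, Nat.cast_ofNat, map_ofNat] at h ⊢
    linear_combination h
  | succ n ih =>
    have h := congrArg derivative ih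
    simp only [Function.iterate_succ_apply', derivative_mul, derivative_add, derivative_sub,
      derivative_X_pow, derivative_X, derivative_one, derivative_natCast, derivative_ofNat,
      Nat.cast_ofNat, map_ofNat, Nat.cast_add, Nat.cast_one] at h ⊢
    linear_combination h

end Rodrigues

theorem iteratedDeriv_eval (p : ℝ[X]) (n : ℕ) :
    iteratedDeriv n (fun x => p.eval x) = fun x => (derivative^[n] p).eval x := by
  induction n generalizing p with
  | zero => simp
  | succ n ih =>
    rw [iteratedDeriv_succ', Function.iterate_succ_apply, ← ih]
    congr 1
    funext x
    exact p.deriv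

end Polynomial

namespace Real.Wallis

theorem W_lt_pi_div_two (k : ℕ) : W k < π / 2 := by
  refine lt_of_lt_of_le ?_ (W_le (k + 1))
  rw [W_succ]
  refine lt_mul_of_one_lt_right (W_pos k) ?_
  rw [div_mul_div_comm, one_lt_div (by positivity)]
  nlinarith

theorem W_mul_centralBinom_sq (k : ℕ) : W k * ((2 * k + 1) * k.centralBinom ^ 2) = 16 ^ k := by
  have hfact := Nat.choose_mul_factorial_mul_factorial (by omega : k ≤ 2 * k)
  rw [show 2 * k - k = k by omega, ← Nat.centralBinom_eq_two_mul_choose] at hfact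
  have hcb : (k.centralBinom : ℝ) ≠ 0 := by exact_mod_cast k.centralBinom_ne_zero
  rw [W_eq_factorial_ratio, ← hfact, pow_mul]
  push_cast
  field_simp
  norm_num

end Real.Wallis

theorem two_lt_pi_mul_centralBinom_div_four_pow_sq (m : ℕ) :
    2 < π * ((2 * m + 1) * (m.centralBinom / 4 ^ m) ^ 2) := by
  have hW := Real.Wallis.W_mul_centralBinom_sq m
  have hpos := Real.Wallis.W_pos m
  have hlt := Real.Wallis.W_lt_pi_div_two m
  have h16 : (4 : ℝ) ^ m * 4 ^ m = 16 ^ m := by rw [← mul_pow]; norm_num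
  have hcb : (m.centralBinom : ℝ) ≠ 0 := by exact_mod_cast m.centralBinom_ne_zero
  rw [div_pow, sq (4 ^ m : ℝ), h16, ← hW]
  field_simp
  nlinarith

theorem apply_zero_le_of_mul_deriv_nonneg {f f' : ℝ → ℝ} {r : ℝ}
    (hf : ∀ x ∈ Set.uIcc 0 r, HasDerivAt f (f' x) x)
    (hsign : ∀ x ∈ Set.uIcc 0 r, 0 ≤ x * f' x) : f 0 ≤ f r := by
  have hcont : ContinuousOn f (Set.uIcc 0 r) := fun x hx =>
    (hf x hx).continuousAt.continuousWithinAt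
  rcases lt_trichotomy r 0 with hr | rfl | hr
  · rw [Set.uIcc_of_ge hr.le] at hf hsign hcont
    obtain ⟨ξ, hξ, hslope⟩ := exists_hasDerivAt_eq_slope f f' hr hcont
      fun x hx => hf x (Set.Ioo_subset_Icc_self hx)
    have := hsign ξ (Set.Ioo_subset_Icc_self hξ)
    rw [eq_div_iff (by linarith)] at hslope
    nlinarith [hξ.2]
  · exact le_rfl
  · rw [Set.uIcc_of_le hr.le] at hf hsign hcont
    obtain ⟨ξ, hξ, hslope⟩ := exists_hasDerivAt_eq_slope f f' hr hcont
      fun x hx => hf x (Set.Ioo_subset_Icc_self hx)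
    have := hsign ξ (Set.Ioo_subset_Icc_self hξ)
    rw [eq_div_iff (by linarith)] at hslope
    nlinarith [hξ.1]

/-- For `x = cos θ`, `(soninPoly ν p).eval x / sin θ` is the energy
`(ν + ½)² u² + u'² + u² / (4 sin² θ)` of `u(θ) = √(sin θ) p(cos θ)`. -/
noncomputable def soninPoly (ν : ℝ) (p : ℝ[X]) : ℝ[X] :=
  C ((ν + 1 / 2) ^ 2) * (1 - X ^ 2) * p ^ 2 + (1 - X ^ 2) ^ 2 * derivative p ^ 2
    - X * (1 - X ^ 2) * p * derivative p + C (1 / 4) * (1 + X ^ 2) * p ^ 2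

section Sonin

variable {ν : ℝ} {p : ℝ[X]}
  (hp : (1 - X ^ 2) * derivative (derivative p) = 2 * X * derivative p - C (ν * (ν + 1)) * p)

include hp

theorem soninPoly_eval_derivative (x : ℝ) :
    (1 - x ^ 2) * (derivative (soninPoly ν p)).eval x + x * (soninPoly ν p).eval x
      = x * p.eval x ^ 2 / 2 := by
  have hx := congrArg (eval x) hp
  simp only [eval_mul, eval_sub, eval_pow, eval_X, eval_one, eval_C, eval_ofNat] at hx
  simp only [soninPoly, derivative_add, derivative_sub, derivative_mul, derivative_pow,
    derivative_C, derivative_X, derivative_one, eval_add, eval_sub, eval_mul, eval_pow, eval_C,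
    eval_X, eval_one, eval_zero]
  linear_combination (1 - x ^ 2) * (2 * (1 - x ^ 2) * (derivative p).eval x - x * p.eval x) * hx

theorem hasDerivAt_soninPoly_div_sqrt {x : ℝ} (hx : x ∈ Set.Ioo (-1 : ℝ) 1) :
    HasDerivAt (fun y => (soninPoly ν p).eval y / √(1 - y ^ 2))
      (x * p.eval x ^ 2 / (2 * (1 - x ^ 2) * √(1 - x ^ 2))) x := by
  have hpos : 0 < 1 - x ^ 2 := by nlinarith [hx.1, hx.2]
  have hsqrt : HasDerivAt (fun y => √(1 - y ^ 2)) (-(2 * x) / (2 * √(1 - x ^ 2))) x :=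
    (((hasDerivAt_pow 2 x).const_sub 1).congr_deriv (by ring)).sqrt hpos.ne'
  refine (((soninPoly ν p).hasDerivAt x).div hsqrt (Real.sqrt_pos.mpr hpos).ne').congr_deriv ?_
  have hs0 := (Real.sqrt_pos.mpr hpos).ne'
  field_simp
  rw [Real.sq_sqrt hpos.le]
  linear_combination 2 * (1 - x ^ 2) * soninPoly_eval_derivative hp x

theorem soninPoly_eval_zero_le {r : ℝ} (hr : r ∈ Set.Ioo (-1 : ℝ) 1) (hroot : p.eval r = 0) :
    (soninPoly ν p).eval 0 ≤ (1 - r ^ 2) ^ ((3 : ℝ) / 2) * (derivative p).eval r ^ 2 := by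
  have hsub : Set.uIcc 0 r ⊆ Set.Ioo (-1) 1 :=
    Set.ordConnected_Ioo.uIcc_subset ⟨by norm_num, by norm_num⟩ hr
  have hmono := apply_zero_le_of_mul_deriv_nonneg
    (fun x hx => hasDerivAt_soninPoly_div_sqrt hp (hsub hx)) fun x hx => by
      have hpos : 0 < 1 - x ^ 2 := by nlinarith [(hsub hx).1, (hsub hx).2]
      have := Real.sqrt_pos.mpr hpos
      rw [← mul_div_assoc, ← mul_assoc, ← sq]
      positivity
  have hpos : 0 < 1 - r ^ 2 := by nlinarith [hr.1, hr.2]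
  have h32 : (1 - r ^ 2) ^ ((3 : ℝ) / 2) = (1 - r ^ 2) ^ 2 / √(1 - r ^ 2) := by
    rw [show (3 : ℝ) / 2 = 2 - 1 / 2 by norm_num, Real.rpow_sub hpos, Real.rpow_two,
      ← Real.sqrt_eq_rpow]
  simpa [soninPoly, hroot, h32, mul_div_right_comm] using hmono

end Sonin

noncomputable def legendrePoly (c : ℕ) : ℝ[X] :=
  C (1 / (2 ^ c * c ! : ℝ)) * derivative^[c] (((X : ℝ[X]) ^ 2 - 1) ^ c)

theorem legendreP_eq_eval (c : ℕ) : legendreP c = fun t => (legendrePoly c).eval t := by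
  funext t
  have : (fun s : ℝ => (s ^ 2 - 1) ^ c) = fun s => (((X : ℝ[X]) ^ 2 - 1) ^ c).eval s := by
    simp
  simp [legendreP, legendrePoly, this, iteratedDeriv_eval]

theorem deriv_legendreP (c : ℕ) (t : ℝ) :
    deriv (legendreP c) t = (derivative (legendrePoly c)).eval t := by
  rw [legendreP_eq_eval, Polynomial.deriv]

theorem legendrePoly_ode (c : ℕ) :
    (1 - X ^ 2) * derivative (derivative (legendrePoly c)) =
      2 * X * derivative (legendrePoly c) - C ((c : ℝ) * (c + 1)) * legendrePoly c := by
  have h := X_sq_sub_one_mul_iterate_derivative (R := ℝ) c c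
  simp only [legendrePoly, derivative_C_mul, ← Function.iterate_succ_apply' derivative, map_mul,
    map_add, map_natCast, map_one]
  linear_combination (-C (1 / (2 ^ c * c ! : ℝ))) * h

theorem legendrePoly_eval_zero_even (m : ℕ) :
    (legendrePoly (2 * m)).eval 0 = (-1) ^ m * m.centralBinom / 4 ^ m := by
  rw [legendrePoly, eval_mul, eval_C, iterate_derivative_eval_zero, coeff_X_sq_sub_one_pow,
    Nat.centralBinom_eq_two_mul_choose, show 2 * m - m = m by omega, pow_mul]
  field_simp
  ring

theorem derivative_legendrePoly_eval_zero_odd (m : ℕ) :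
    (derivative (legendrePoly (2 * m + 1))).eval 0
      = (-1) ^ m * (2 * m + 1) * m.centralBinom / 4 ^ m := by
  have hchoose : ((2 * m + 1).choose (m + 1) : ℝ) * (m + 1) = (2 * m + 1) * m.centralBinom := by
    exact_mod_cast (Nat.add_one_mul_choose_eq (2 * m) m).symm
  have hfact : ((2 * m + 1 + 1)! : ℝ) = (2 * m + 2) * (2 * m + 1)! := by
    push_cast [Nat.factorial_succ (2 * m + 1)]
    ring
  rw [legendrePoly, derivative_C_mul, ← Function.iterate_succ_apply' derivative, eval_mul, eval_C,
    iterate_derivative_eval_zero, hfact, show (2 * m + 1).succ = 2 * (m + 1) by omega,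
    coeff_X_sq_sub_one_pow, show 2 * m + 1 - (m + 1) = m by omega, pow_succ, pow_mul,
    show (2 : ℝ) ^ 2 = 4 by norm_num]
  field_simp
  linear_combination hchoose

theorem two_mul_lt_pi_mul_soninPoly_legendrePoly_eval_zero (c : ℕ) :
    2 * c < π * (soninPoly c (legendrePoly c)).eval 0 := by
  simp only [soninPoly, eval_add, eval_sub, eval_mul, eval_pow, eval_C, eval_X, eval_one, ne_eq,
    OfNat.ofNat_ne_zero, not_false_eq_true, zero_pow, sub_zero, one_pow, mul_one, one_mul, zero_mul,
    add_zero]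
  obtain ⟨m, rfl | rfl⟩ := Nat.even_or_odd' c
  all_goals
    have hW := two_lt_pi_mul_centralBinom_div_four_pow_sq m
    have hsign (a : ℝ) : ((-1) ^ m * a) ^ 2 = a ^ 2 := by
      rw [mul_pow, ← pow_mul, mul_comm m 2, pow_mul]
      norm_num
    push_cast
  · have hm : (0 : ℝ) ≤ m := m.cast_nonneg
    have hP : (legendrePoly (2 * m)).eval 0 ^ 2 = (m.centralBinom / 4 ^ m) ^ 2 := by
      rw [legendrePoly_eval_zero_even, mul_div_assoc, hsign]
    rw [hP]
    have hq : 0 < π * (m.centralBinom / 4 ^ m : ℝ) ^ 2 := by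
      have := m.centralBinom_pos
      positivity
    nlinarith [mul_le_mul_of_nonneg_left hW.le hm,
      mul_nonneg pi_pos.le (sq_nonneg ((derivative (legendrePoly (2 * m))).eval 0))]
  · have hP' : (derivative (legendrePoly (2 * m + 1))).eval 0 ^ 2
        = (2 * m + 1) ^ 2 * (m.centralBinom / 4 ^ m) ^ 2 := by
      rw [derivative_legendrePoly_eval_zero_odd, mul_assoc, mul_div_assoc, hsign, mul_div_assoc,
        mul_pow]
    rw [hP']
    nlinarith [mul_lt_mul_of_pos_left hW (by linarith : (0 : ℝ) < 2 * m + 1),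
      mul_nonneg pi_pos.le (sq_nonneg ((legendrePoly (2 * m + 1)).eval 0))]

theorem wLeg_lt_pi_div {x : ℕ → ℕ → ℝ} (hx : IsLegendreRootSystem x) {c k : ℕ} (hc : 1 ≤ c)
    (hk : k ∈ Finset.Icc 1 c) : wLeg x k c < π / c := by
  rw [Finset.mem_Icc] at hk
  obtain ⟨hmem, hroot⟩ := (hx c hc).1 k hk.1 hk.2
  rw [legendreP_eq_eval] at hroot
  have hle := soninPoly_eval_zero_le (legendrePoly_ode c) hmem hroot
  have hlt := two_mul_lt_pi_mul_soninPoly_legendrePoly_eval_zero c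
  have hc0 : (0 : ℝ) < c := by exact_mod_cast hc
  rw [wLeg, deriv_legendreP, div_lt_div_iff₀ (by nlinarith [pi_pos]) hc0]
  nlinarith [pi_pos]

/-- For every `c ≥ 1`, the normalizing constant satisfies `N_c < π`. -/
theorem N_lt_pi (x : ℕ → ℕ → ℝ) (hx : IsLegendreRootSystem x)
    (c : ℕ) (hc : 1 ≤ c) :
    NLeg x c < π := by
  have hc0 : (c : ℝ) ≠ 0 := by positivity
  calc NLeg x c < ∑ _k ∈ Finset.Icc 1 c, π / c :=
        Finset.sum_lt_sum_of_nonempty ⟨1, Finset.mem_Icc.2 ⟨le_rfl, hc⟩⟩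
          fun k hk => wLeg_lt_pi_div hx hc hk
    _ = π := by
        rw [Finset.sum_const, Nat.card_Icc, nsmul_eq_mul, Nat.add_sub_cancel]
        field_simp
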